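/- For every integer n ≥ 1 and every integer ℓ with 1 ≤ ℓ ≤ n+1, the middle 2ℓ levels graph of Q_{2n+1} has a cycle factor. -/

import Mathlib

/-- The Hamming weight of a bitstring of length `n`, i.e., its number of 1-bits. -/
def wt {n : ℕ} (x : Fin n → Bool) : ℕ := (Finset.univ.filter fun i => x i = true).card

/-- The `n`-dimensional hypercube: vertices are bitstrings of length `n`, two of which are
adjacent iff they differ in exactly one position. -/
def cube (n : ℕ) : SimpleGraph (Fin n → Bool) where
  Adj x y := hammingDist x y = 1
  symm := by constructor; intro x y h; show hammingDist y x = 1; rw [hammingDist_comm]; exact h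
  loopless := by constructor; intro x h; simp [hammingDist_self] at h
/-- The vertex set of the middle `2ℓ` levels of the `(2n+1)`-cube: bitstrings with
Hamming weight in the interval `[n+1−ℓ, n+ℓ]`. -/
def middleSet (n l : ℕ) : Set (Fin (2 * n + 1) → Bool) :=
  {x | n + 1 - l ≤ wt x ∧ wt x ≤ n + l}

/-- The middle `2ℓ` levels graph: the subgraph of the `(2n+1)`-cube induced by the vertices
with Hamming weight in `[n+1−ℓ, n+ℓ]`. -/
def middleGraph (n l : ℕ) : SimpleGraph (middleSet n l) :=
  (cube (2 * n + 1)).induce (middleSet n l)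

/-- `H` is a cycle factor of `G`: a spanning subgraph in which every vertex has degree 2. -/
def IsCycleFactor {V : Type*} (G H : SimpleGraph V) : Prop :=
  H ≤ G ∧ ∀ v, (H.neighborSet v).ncard = 2

/-- `H` is a perfect matching of `G`: a spanning subgraph in which every vertex has degree 1. -/
def IsPerfectMatchingOf {V : Type*} (G H : SimpleGraph V) : Prop :=
  H ≤ G ∧ ∀ v, (H.neighborSet v).ncard = 1

/-!
Read a bitstring of length `N` as a lattice path, a `1` being an up-step and a `0` a down-step.
Flipping the `0` that steps into the first minimum of the path raises the weight by one, flipping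
the `1` that steps out of the last minimum lowers it, and these two moves are mutually inverse;
their orbits are the chains of the Greene–Kleitman symmetric chain decomposition of `Q_N`. For odd
`N` every chain meets a band of levels `[a, N - a]` in an even number of consecutive vertices, so
pairing them from the bottom is a perfect matching `M` of the band, and conjugating `M` by
complementation gives a second one. They share no edge: a common edge at `v` would make the step
into the first minimum of the path of `v` also the step out of its last maximum, so the path would
take just two values with a single jump, impossible for `N ≥ 2`. Their union is a cycle factor.
-/

open Finset Function

namespace MiddleLevels

section MinPos

variable (h : ℕ → ℤ) (N : ℕ)

def IsMinPos (k : ℕ) : Prop := k ≤ N ∧ ∀ j ≤ N, h k ≤ h j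

instance : DecidablePred (IsMinPos h N) := fun _ => by unfold IsMinPos; infer_instance

lemma exists_isMinPos : ∃ k, IsMinPos h N k := by
  obtain ⟨k, hk, hmin⟩ := (range (N + 1)).exists_min_image h ⟨0, by simp⟩
  exact ⟨k, Nat.lt_succ_iff.mp (mem_range.mp hk),
    fun j hj => hmin j (mem_range.mpr (Nat.lt_succ_of_le hj))⟩

noncomputable def firstMinPos : ℕ := Nat.find (exists_isMinPos h N)

noncomputable def lastMinPos : ℕ := Nat.findGreatest (IsMinPos h N) N

noncomputable def minVal : ℤ := h (firstMinPos h N)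

lemma isMinPos_firstMinPos : IsMinPos h N (firstMinPos h N) := Nat.find_spec _

lemma firstMinPos_le : firstMinPos h N ≤ N := (isMinPos_firstMinPos h N).1

variable {h N}

lemma minVal_le {j : ℕ} (hj : j ≤ N) : minVal h N ≤ h j := (isMinPos_firstMinPos h N).2 j hj

lemma IsMinPos.minVal_eq {k : ℕ} (hk : IsMinPos h N k) : minVal h N = h k :=
  le_antisymm (minVal_le hk.1) (hk.2 _ (firstMinPos_le h N))

lemma IsMinPos.of_le_minVal {k : ℕ} (hk : k ≤ N) (hle : h k ≤ minVal h N) : IsMinPos h N k :=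
  ⟨hk, fun _ hj => hle.trans (minVal_le hj)⟩

lemma minVal_lt_of_lt_firstMinPos {k : ℕ} (hk : k < firstMinPos h N) : minVal h N < h k := by
  by_contra! hle
  exact Nat.find_min _ hk (.of_le_minVal (hk.le.trans (firstMinPos_le h N)) hle)

variable (h N) in
lemma lastMinPos_le : lastMinPos h N ≤ N := Nat.findGreatest_le N

variable (h N) in
lemma isMinPos_lastMinPos : IsMinPos h N (lastMinPos h N) := by
  obtain ⟨k, hk⟩ := exists_isMinPos h N
  exact Nat.findGreatest_spec hk.1 hk

lemma apply_lastMinPos : h (lastMinPos h N) = minVal h N :=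
  (isMinPos_lastMinPos h N).minVal_eq.symm

lemma minVal_lt_of_lastMinPos_lt {k : ℕ} (hk : lastMinPos h N < k) (hkN : k ≤ N) :
    minVal h N < h k := by
  by_contra! hle
  exact Nat.findGreatest_is_greatest hk hkN (.of_le_minVal hkN hle)

lemma firstMinPos_eq {p : ℕ} (hp : IsMinPos h N p) (hlt : ∀ k < p, h p < h k) :
    firstMinPos h N = p :=
  (Nat.find_eq_iff _).mpr ⟨hp, fun k hk hkmin => (hlt k hk).not_ge (hkmin.2 p hp.1)⟩

lemma lastMinPos_eq {p : ℕ} (hp : IsMinPos h N p) (hlt : ∀ k, p < k → k ≤ N → h p < h k) :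
    lastMinPos h N = p :=
  Nat.findGreatest_eq_iff.mpr
    ⟨hp.1, fun _ => hp, fun k hk hkN hkmin => (hlt k hk hkN).not_ge (hkmin.2 p hp.1)⟩

end MinPos

section Paths

variable {N : ℕ} (v : Fin N → Bool)

def step (b : Bool) : ℤ := if b then 1 else -1

def pad (j : ℕ) : Bool := if hj : j < N then v ⟨j, hj⟩ else false

def height (k : ℕ) : ℤ := ∑ j ∈ range k, step (pad v j)

def flipAt (p : ℕ) : Fin N → Bool := fun i => if (i : ℕ) = p then !v i else v i

variable {v}

lemma pad_of_lt {j : ℕ} (hj : j < N) : pad v j = v ⟨j, hj⟩ := dif_pos hj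

lemma pad_compl {j : ℕ} (hj : j < N) : pad vᶜ j = !pad v j := by
  simp [pad_of_lt hj]

lemma pad_flipAt {p : ℕ} (hp : p < N) (j : ℕ) :
    pad (flipAt v p) j = if j = p then !pad v j else pad v j := by
  unfold pad flipAt
  split_ifs <;> simp_all

variable (v) in
lemma height_zero : height v 0 = 0 := sum_range_zero _

variable (v) in
lemma height_succ (k : ℕ) : height v (k + 1) = height v k + step (pad v k) :=
  sum_range_succ _ _

lemma pad_eq_false_of_height_succ_lt {k : ℕ} (hk : height v (k + 1) < height v k) :
    pad v k = false ∧ height v k = height v (k + 1) + 1 := by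
  rw [height_succ] at *
  cases hb : pad v k <;> simp [hb, step] at hk ⊢

lemma pad_eq_true_of_height_lt_succ {k : ℕ} (hk : height v k < height v (k + 1)) :
    pad v k = true ∧ height v (k + 1) = height v k + 1 := by
  rw [height_succ] at *
  cases hb : pad v k <;> simp [hb, step] at hk ⊢

variable (v) in
lemma height_succ_ne (k : ℕ) : height v (k + 1) ≠ height v k := by
  rw [height_succ]
  cases pad v k <;> simp [step]

variable (v) in
lemma height_length : height v N = 2 * wt v - N := by
  have hstep (i : Fin N) : step (v i) = 2 * (if v i = true then 1 else 0) - 1 := by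
    cases v i <;> simp [step]
  have hpad (i : Fin N) : pad v i = v i := pad_of_lt i.isLt
  rw [height, ← Fin.sum_univ_eq_sum_range (fun j => step (pad v j))]
  simp only [hpad, hstep, sum_sub_distrib, ← mul_sum, sum_boole, wt]
  simp

lemma height_compl {k : ℕ} (hk : k ≤ N) : height vᶜ k = -height v k := by
  rw [height, height, ← sum_neg_distrib]
  refine sum_congr rfl fun j hj => ?_
  rw [pad_compl (by simp at hj; omega)]
  cases pad v j <;> simp [step]

lemma height_flipAt {p : ℕ} (hp : p < N) (k : ℕ) :
    height (flipAt v p) k = if k ≤ p then height v k else height v k - 2 * step (pad v p) := by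
  induction k with
  | zero => simp [height_zero]
  | succ k ih =>
    rw [height_succ, height_succ, ih, pad_flipAt hp]
    rcases lt_trichotomy k p with hkp | rfl | hkp
    · simp [hkp.le, hkp.ne, Nat.succ_le_of_lt hkp]
    · cases pad v k <;> simp [step] <;> ring
    · simp [hkp.ne', show ¬k ≤ p by omega, show ¬k + 1 ≤ p by omega]; ring

lemma wt_flipAt {p : ℕ} (hp : p < N) : (wt (flipAt v p) : ℤ) = wt v - step (pad v p) := by
  have h := height_flipAt (v := v) hp N
  rw [if_neg (by omega), height_length, height_length] at h
  linarith

variable (v) in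
lemma flipAt_flipAt (p : ℕ) : flipAt (flipAt v p) p = v := by
  ext i
  unfold flipAt
  split_ifs <;> simp

variable (v) in
lemma compl_flipAt (p : ℕ) : (flipAt v p)ᶜ = flipAt vᶜ p := by
  ext i
  by_cases h : (i : ℕ) = p <;> simp [flipAt, h]

lemma hammingDist_flipAt {p : ℕ} (hp : p < N) : hammingDist v (flipAt v p) = 1 := by
  rw [hammingDist, card_eq_one]
  refine ⟨⟨p, hp⟩, ?_⟩
  ext i
  simp [flipAt, Fin.ext_iff]

lemma eq_of_flipAt_eq {p q : ℕ} (hp : p < N) (h : flipAt v p = flipAt v q) : p = q := by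
  by_contra hpq
  have := congrFun h ⟨p, hp⟩
  simp [flipAt, hpq] at this

end Paths

section Moves

variable {N : ℕ} (v : Fin N → Bool)

noncomputable def depth : ℤ := minVal (height v) N

noncomputable def raisePos : ℕ := firstMinPos (height v) N - 1

noncomputable def lowerPos : ℕ := lastMinPos (height v) N

variable {v}

lemma depth_le_height {k : ℕ} (hk : k ≤ N) : depth v ≤ height v k := minVal_le hk

variable (v) in
lemma depth_nonpos : depth v ≤ 0 := height_zero v ▸ depth_le_height (Nat.zero_le N)

lemma height_lowerPos : height v (lowerPos v) = depth v := apply_lastMinPos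

lemma lt_height_of_lowerPos_lt {k : ℕ} (hk : lowerPos v < k) (hkN : k ≤ N) :
    depth v < height v k :=
  minVal_lt_of_lastMinPos_lt hk hkN

section Raise

variable (hv : depth v < 0)
include hv

lemma raisePos_succ : raisePos v + 1 = firstMinPos (height v) N := by
  have : firstMinPos (height v) N ≠ 0 := fun h0 => by
    simp [depth, minVal, h0, height_zero] at hv
  unfold raisePos
  omega

lemma raisePos_lt : raisePos v < N := by
  have := raisePos_succ hv
  have := firstMinPos_le (height v) N
  omega

lemma lt_height_of_le_raisePos {k : ℕ} (hk : k ≤ raisePos v) : depth v < height v k :=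
  minVal_lt_of_lt_firstMinPos (by have := raisePos_succ hv; omega)

lemma pad_raisePos_and_height :
    pad v (raisePos v) = false ∧ height v (raisePos v) = depth v + 1 := by
  have h := pad_eq_false_of_height_succ_lt (v := v) (k := raisePos v) <| by
    rw [raisePos_succ hv]
    exact lt_height_of_le_raisePos hv le_rfl
  rwa [raisePos_succ hv] at h

lemma height_flipAt_raisePos (k : ℕ) :
    height (flipAt v (raisePos v)) k = if k ≤ raisePos v then height v k else height v k + 2 := by
  rw [height_flipAt (raisePos_lt hv), (pad_raisePos_and_height hv).1]
  simp [step]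

lemma wt_flipAt_raisePos : (wt (flipAt v (raisePos v)) : ℤ) = wt v + 1 := by
  rw [wt_flipAt (raisePos_lt hv), (pad_raisePos_and_height hv).1]
  simp [step]

lemma lowerPos_flipAt_raisePos : lowerPos (flipAt v (raisePos v)) = raisePos v := by
  have hp := (pad_raisePos_and_height hv).2
  apply lastMinPos_eq
  · refine ⟨(raisePos_lt hv).le, fun j hj => ?_⟩
    rw [height_flipAt_raisePos hv, height_flipAt_raisePos hv, if_pos le_rfl, hp]
    split_ifs with hjp
    · exact lt_height_of_le_raisePos hv hjp
    · linarith [depth_le_height (v := v) hj]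
  · intro k hk hkN
    rw [height_flipAt_raisePos hv, height_flipAt_raisePos hv, if_pos le_rfl, if_neg (by omega), hp]
    linarith [depth_le_height (v := v) hkN]

lemma depth_flipAt_raisePos : depth (flipAt v (raisePos v)) = depth v + 1 := by
  rw [depth, ← apply_lastMinPos, ← lowerPos, lowerPos_flipAt_raisePos hv,
    height_flipAt_raisePos hv, if_pos le_rfl, (pad_raisePos_and_height hv).2]

end Raise

section Lower

variable (hv : depth v < height v N)
include hv

lemma lowerPos_lt : lowerPos v < N :=
  (lastMinPos_le _ _).lt_of_ne fun h => by
    rw [depth, ← apply_lastMinPos, h] at hv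
    exact hv.false

lemma pad_lowerPos_and_height :
    pad v (lowerPos v) = true ∧ height v (lowerPos v + 1) = depth v + 1 := by
  have h := pad_eq_true_of_height_lt_succ (v := v) (k := lowerPos v) <| by
    rw [height_lowerPos]
    exact lt_height_of_lowerPos_lt (Nat.lt_succ_self _) (lowerPos_lt hv)
  rwa [height_lowerPos] at h

lemma height_flipAt_lowerPos (k : ℕ) :
    height (flipAt v (lowerPos v)) k = if k ≤ lowerPos v then height v k else height v k - 2 := by
  rw [height_flipAt (lowerPos_lt hv), (pad_lowerPos_and_height hv).1]
  simp [step]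

lemma wt_flipAt_lowerPos : (wt (flipAt v (lowerPos v)) : ℤ) = wt v - 1 := by
  rw [wt_flipAt (lowerPos_lt hv), (pad_lowerPos_and_height hv).1]
  simp [step]

lemma firstMinPos_flipAt_lowerPos :
    firstMinPos (height (flipAt v (lowerPos v))) N = lowerPos v + 1 := by
  have hq := (pad_lowerPos_and_height hv).2
  have hqN := lowerPos_lt hv
  apply firstMinPos_eq
  · refine ⟨hqN, fun j hj => ?_⟩
    rw [height_flipAt_lowerPos hv, height_flipAt_lowerPos hv, if_neg (by omega), hq]
    split_ifs with hjq
    · linarith [depth_le_height (v := v) hj]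
    · linarith [lt_height_of_lowerPos_lt (v := v) (by omega) hj]
  · intro k hk
    rw [height_flipAt_lowerPos hv, height_flipAt_lowerPos hv, if_neg (by omega),
      if_pos (by omega), hq]
    linarith [depth_le_height (v := v) (k := k) (by omega)]

lemma raisePos_flipAt_lowerPos : raisePos (flipAt v (lowerPos v)) = lowerPos v := by
  rw [raisePos, firstMinPos_flipAt_lowerPos hv, Nat.add_sub_cancel]

lemma depth_flipAt_lowerPos : depth (flipAt v (lowerPos v)) = depth v - 1 := by
  rw [depth, minVal, firstMinPos_flipAt_lowerPos hv, height_flipAt_lowerPos hv, if_neg (by omega),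
    (pad_lowerPos_and_height hv).2]
  ring

end Lower

end Moves

section Complement

variable {N : ℕ} {v : Fin N → Bool}

lemma wt_compl : (wt vᶜ : ℤ) = N - wt v := by
  have h := height_compl (v := v) le_rfl
  rw [height_length, height_length] at h
  linarith

lemma hammingDist_compl (w : Fin N → Bool) : hammingDist vᶜ wᶜ = hammingDist v w :=
  hammingDist_comp (fun _ => not) fun _ => Bool.not_injective

/-- `lowerPos vᶜ` is the last maximum of `height v`. -/
lemma raisePos_ne_lowerPos_compl (hN : 2 ≤ N) (hv : depth v < 0) : raisePos v ≠ lowerPos vᶜ := by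
  intro hpq
  have hpN := (raisePos_lt hv).le
  have hp := (pad_raisePos_and_height hv).2
  have hdepth : depth vᶜ = -(depth v + 1) := by
    rw [← height_lowerPos, ← hpq, height_compl hpN, hp]
  have hmax : ∀ j ≤ N, height v j ≤ depth v + 1 := fun j hj => by
    have := depth_le_height (v := vᶜ) hj
    rw [height_compl hj, hdepth] at this
    linarith
  have hleft : ∀ k ≤ raisePos v, height v k = depth v + 1 := fun k hk =>
    le_antisymm (hmax k (hk.trans hpN)) (lt_height_of_le_raisePos hv hk)
  have hright : ∀ k, raisePos v < k → k ≤ N → height v k = depth v := fun k hk hkN => by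
    have := lt_height_of_lowerPos_lt (v := vᶜ) (hpq ▸ hk) hkN
    rw [height_compl hkN, hdepth] at this
    linarith [depth_le_height (v := v) hkN]
  rcases Nat.eq_zero_or_pos (raisePos v) with h0 | hpos
  · exact height_succ_ne v 1 ((hright 2 (by omega) hN).trans (hright 1 (by omega) (by omega)).symm)
  · exact height_succ_ne v 0 ((hleft 1 hpos).trans (hleft 0 (Nat.zero_le _)).symm)

end Complement

section ChainMatching

variable {N : ℕ} (a : ℕ)

def band (N a : ℕ) : Set (Fin N → Bool) := {v | a ≤ wt v ∧ wt v + a ≤ N}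

/-- Raising and lowering change `wt v` and `depth v` by the same amount, so this is constant along
a chain; at the bottom of the chain, where `depth v = height v N`, it equals `wt v`. -/
noncomputable def chainBottom (v : Fin N → Bool) : ℤ := N - wt v + depth v

/-- The chain through `v` meets `band N a` in the levels from `max (chainBottom v) a` to
`N - max (chainBottom v) a`, an even number of them as `N` is odd; they are matched in consecutive
pairs from the bottom. -/
def GoesUp (v : Fin N → Bool) : Prop := Even ((wt v : ℤ) - max (chainBottom v) a)

noncomputable instance : DecidablePred (GoesUp (N := N) a) := fun _ => by unfold GoesUp; infer_instance

noncomputable def movePos (v : Fin N → Bool) : ℕ :=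
  if GoesUp a v then raisePos v else lowerPos v

noncomputable def chainMatching (v : Fin N → Bool) : Fin N → Bool := flipAt v (movePos a v)

variable {a} {v : Fin N → Bool}

lemma compl_mem_band (hv : v ∈ band N a) : vᶜ ∈ band N a := by
  have := wt_compl (v := v)
  simp only [band, Set.mem_ofPred_eq] at hv ⊢
  omega

lemma depth_lt_zero_of_goesUp (hN : Odd N) (hv : v ∈ band N a) (hup : GoesUp a v) :
    depth v < 0 ∧ wt v + a < N := by
  obtain ⟨m, rfl⟩ := hN
  have := height_length v
  have := depth_nonpos v
  have := depth_le_height (v := v) le_rfl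
  obtain ⟨hlo, hhi⟩ := hv
  simp only [GoesUp, chainBottom, Int.even_iff] at hup
  omega

lemma depth_lt_height_of_not_goesUp (hv : v ∈ band N a) (hdown : ¬GoesUp a v) :
    depth v < height v N ∧ a < wt v := by
  have := height_length v
  have := depth_le_height (v := v) le_rfl
  obtain ⟨hlo, hhi⟩ := hv
  simp only [GoesUp, chainBottom, Int.not_even_iff] at hdown
  omega

lemma chainMatching_of_goesUp (hup : GoesUp a v) : chainMatching a v = flipAt v (raisePos v) := by
  rw [chainMatching, movePos, if_pos hup]

lemma chainMatching_of_not_goesUp (hdown : ¬GoesUp a v) :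
    chainMatching a v = flipAt v (lowerPos v) := by
  rw [chainMatching, movePos, if_neg hdown]

lemma goesUp_flipAt_raisePos (hv : depth v < 0) :
    GoesUp a (flipAt v (raisePos v)) ↔ ¬GoesUp a v := by
  have hc : chainBottom (flipAt v (raisePos v)) = chainBottom v := by
    rw [chainBottom, chainBottom, wt_flipAt_raisePos hv, depth_flipAt_raisePos hv]
    ring
  rw [GoesUp, GoesUp, hc, wt_flipAt_raisePos hv, add_sub_right_comm, Int.even_add_one]

lemma goesUp_flipAt_lowerPos (hv : depth v < height v N) :
    GoesUp a (flipAt v (lowerPos v)) ↔ ¬GoesUp a v := by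
  have hc : chainBottom (flipAt v (lowerPos v)) = chainBottom v := by
    rw [chainBottom, chainBottom, wt_flipAt_lowerPos hv, depth_flipAt_lowerPos hv]
    ring
  rw [GoesUp, GoesUp, hc, wt_flipAt_lowerPos hv, sub_right_comm, Int.even_sub_one]

variable (hN : Odd N) (hv : v ∈ band N a)
include hN hv

lemma movePos_lt : movePos a v < N := by
  unfold movePos
  split_ifs with hup
  · exact raisePos_lt (depth_lt_zero_of_goesUp hN hv hup).1
  · exact lowerPos_lt (depth_lt_height_of_not_goesUp hv hup).1

lemma pad_movePos : pad v (movePos a v) = !decide (GoesUp a v) := by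
  unfold movePos
  split_ifs with hup
  · simp [hup, (pad_raisePos_and_height (depth_lt_zero_of_goesUp hN hv hup).1).1]
  · simp [hup, (pad_lowerPos_and_height (depth_lt_height_of_not_goesUp hv hup).1).1]

lemma hammingDist_chainMatching : hammingDist v (chainMatching a v) = 1 :=
  hammingDist_flipAt (movePos_lt hN hv)

lemma chainMatching_mem_band : chainMatching a v ∈ band N a := by
  have ⟨hlo, hhi⟩ := hv
  by_cases hup : GoesUp a v
  · obtain ⟨hd, hwt⟩ := depth_lt_zero_of_goesUp hN hv hup
    have := wt_flipAt_raisePos hd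
    rw [chainMatching_of_goesUp hup]
    constructor <;> omega
  · obtain ⟨hd, hwt⟩ := depth_lt_height_of_not_goesUp hv hup
    have := wt_flipAt_lowerPos hd
    rw [chainMatching_of_not_goesUp hup]
    constructor <;> omega

lemma chainMatching_chainMatching : chainMatching a (chainMatching a v) = v := by
  by_cases hup : GoesUp a v
  · have hd := (depth_lt_zero_of_goesUp hN hv hup).1
    have hdown : ¬GoesUp a (flipAt v (raisePos v)) := by
      rw [goesUp_flipAt_raisePos hd]
      exact not_not_intro hup
    rw [chainMatching_of_goesUp hup, chainMatching_of_not_goesUp hdown,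
      lowerPos_flipAt_raisePos hd, flipAt_flipAt]
  · have hd := (depth_lt_height_of_not_goesUp hv hup).1
    have hup' : GoesUp a (flipAt v (lowerPos v)) := (goesUp_flipAt_lowerPos hd).mpr hup
    rw [chainMatching_of_not_goesUp hup, chainMatching_of_goesUp hup',
      raisePos_flipAt_lowerPos hd, flipAt_flipAt]

lemma chainMatching_ne_compl (hN' : 2 ≤ N) : chainMatching a v ≠ (chainMatching a vᶜ)ᶜ := by
  have hvc := compl_mem_band hv
  intro h
  rw [chainMatching, chainMatching, compl_flipAt, compl_compl] at h
  have hpos := eq_of_flipAt_eq (movePos_lt hN hv) h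
  have hbits := pad_movePos hN hvc
  rw [← hpos, pad_compl (movePos_lt hN hv), pad_movePos hN hv, Bool.not_inj_iff] at hbits
  by_cases hup : GoesUp a v
  · have hdown : ¬GoesUp a vᶜ := by simpa [hup] using hbits
    have hd := (depth_lt_zero_of_goesUp hN hv hup).1
    rw [movePos, movePos, if_pos hup, if_neg hdown] at hpos
    exact raisePos_ne_lowerPos_compl hN' hd hpos
  · have hup' : GoesUp a vᶜ := by simpa [hup] using hbits
    have hd := (depth_lt_zero_of_goesUp hN hvc hup').1
    rw [movePos, movePos, if_neg hup, if_pos hup'] at hpos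
    exact raisePos_ne_lowerPos_compl hN' hd (by rw [compl_compl]; exact hpos.symm)

end ChainMatching

theorem exists_isCycleFactor_of_involutive {V : Type*} {G : SimpleGraph V} {f g : V → V}
    (hf : Involutive f) (hg : Involutive g) (hGf : ∀ v, G.Adj v (f v)) (hGg : ∀ v, G.Adj v (g v))
    (hfg : ∀ v, f v ≠ g v) : ∃ H, IsCycleFactor G H := by
  refine ⟨SimpleGraph.fromRel fun v w => w = f v ∨ w = g v, fun v w hvw => ?_, fun v => ?_⟩
  · rw [SimpleGraph.fromRel_adj] at hvw
    rcases hvw with ⟨-, (rfl | rfl) | (rfl | rfl)⟩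
    exacts [hGf v, hGg v, (hGf w).symm, (hGg w).symm]
  · have hfv := (hGf v).ne
    have hgv := (hGg v).ne
    have hf' (w : V) : v = f w ↔ w = f v := eq_comm.trans hf.eq_iff
    have hg' (w : V) : v = g w ↔ w = g v := eq_comm.trans hg.eq_iff
    have hnbr : (SimpleGraph.fromRel fun v w => w = f v ∨ w = g v).neighborSet v = {f v, g v} := by
      ext w
      simp only [SimpleGraph.mem_neighborSet, SimpleGraph.fromRel_adj, Set.mem_insert_iff,
        Set.mem_singleton_iff, hf', hg', or_self]
      exact and_iff_right_of_imp (by rintro (rfl | rfl) <;> assumption)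
    rw [hnbr, Set.ncard_pair (hfg v)]

theorem exists_isCycleFactor_band {N : ℕ} (hN : Odd N) (hN' : 2 ≤ N) (a : ℕ) :
    ∃ H, IsCycleFactor ((cube N).induce (band N a)) H := by
  let f (v : band N a) : band N a := ⟨chainMatching a v, chainMatching_mem_band hN v.2⟩
  let g (v : band N a) : band N a :=
    ⟨(chainMatching a (v : Fin N → Bool)ᶜ)ᶜ,
      compl_mem_band (chainMatching_mem_band hN (compl_mem_band v.2))⟩
  refine exists_isCycleFactor_of_involutive (f := f) (g := g) (fun v => ?_) (fun v => ?_)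
    (fun v => ?_) (fun v => ?_) (fun v h => ?_)
  · exact Subtype.ext (chainMatching_chainMatching hN v.2)
  · exact Subtype.ext (by simp [g, chainMatching_chainMatching hN (compl_mem_band v.2)])
  · exact hammingDist_chainMatching hN v.2
  · show hammingDist (v : Fin N → Bool) (chainMatching a (v : Fin N → Bool)ᶜ)ᶜ = 1
    rw [← hammingDist_compl, compl_compl]
    exact hammingDist_chainMatching hN (compl_mem_band v.2)
  · exact chainMatching_ne_compl hN v.2 hN' (congrArg Subtype.val h)

lemma middleSet_eq_band (n l : ℕ) : middleSet n l = band (2 * n + 1) (n + 1 - l) := by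
  ext v
  have := wt_compl (v := v)
  simp only [middleSet, band, Set.mem_ofPred_eq]
  omega

end MiddleLevels

theorem middle_levels_cycle_factor_general (n l : ℕ) (hn : 1 ≤ n) :
    ∃ H : SimpleGraph (middleSet n l), IsCycleFactor (middleGraph n l) H := by
  rw [middleGraph, MiddleLevels.middleSet_eq_band]
  exact MiddleLevels.exists_isCycleFactor_band (odd_two_mul_add_one n) (by omega) _

/-- For any `n ≥ 1` and `1 ≤ ℓ ≤ n+1`, the subgraph of the `(2n+1)`-cube induced by the
middle `2ℓ` levels has a cycle factor. -/
theorem middle_levels_cycle_factor (n l : ℕ) (hn : 1 ≤ n) (hl1 : 1 ≤ l) (hl2 : l ≤ n + 1) :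
    ∃ H : SimpleGraph (middleSet n l), IsCycleFactor (middleGraph n l) H :=
  middle_levels_cycle_factor_general n l hn
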